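/- arXiv:1803.00754 — 2 statements merged into one kernel-verified Lean document; each statement's English description precedes it below -/
import Mathlib

section
/- Let S be a real symmetric N×N matrix with all eigenvalues in [-1,1], and let Z = diag(σ) be a diagonal matrix with diagonal entries Z_ii ∈ (0,1). Then every eigenvalue of Q = Z + (I - Z)S lies in [-1,1]. -/
/-!
Write `Q = 1 - P (1 - S)` with `P = 1 - Z` diagonal, entries in `(0, 1]`, and `A = 1 - S`, which
satisfies `0 ≤ A ≤ 2` in the Loewner order. If `P A v = μ v` with `v ≠ 0`, then `A v = μ P⁻¹ v`, so
`v* A v = μ · v* P⁻¹ v`; the left side lies in `[0, 2 v* v]` and `v* P⁻¹ v ≥ v* v > 0` because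
`P ≤ 1`. Hence `μ` is real and lies in `[0, 2]`, so every eigenvalue `1 - μ` of `Q` lies in `[-1, 1]`.
-/

open Matrix
open scoped MatrixOrder ComplexOrder

namespace Matrix

theorem exists_mulVec_eq_smul_of_mem_spectrum {n K : Type*} [Fintype n] [DecidableEq n] [Field K]
    {A : Matrix n n K} {μ : K} (h : μ ∈ spectrum K A) : ∃ v ≠ 0, A *ᵥ v = μ • v := by
  rw [← spectrum_toLin', ← Module.End.hasEigenvalue_iff_mem_spectrum] at h
  obtain ⟨v, hv, hv0⟩ := h.exists_hasEigenvector
  exact ⟨v, hv0, by simpa using Module.End.mem_eigenspace_iff.mp hv⟩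

variable {n 𝕜 : Type*} [Fintype n] [DecidableEq n] [RCLike 𝕜]

theorem IsHermitian.mem_Icc_of_spectrum_subset {A : Matrix n n 𝕜} (hA : A.IsHermitian)
    {r s : ℝ} (h : spectrum ℝ A ⊆ Set.Icc r s) :
    A ∈ Set.Icc (algebraMap ℝ (Matrix n n 𝕜) r) (algebraMap ℝ (Matrix n n 𝕜) s) :=
  ⟨(algebraMap_le_iff_le_spectrum hA.isSelfAdjoint).2 fun _ hx => (h hx).1,
    (le_algebraMap_iff_spectrum_le hA.isSelfAdjoint).2 fun _ hx => (h hx).2⟩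

theorem spectrum_diagonal_mul_subset_Icc {p : n → ℝ} (hp : ∀ i, p i ∈ Set.Ioc 0 1)
    {A : Matrix n n 𝕜} {c : ℝ} (hA : A ∈ Set.Icc 0 (algebraMap ℝ (Matrix n n 𝕜) c)) :
    spectrum 𝕜 (diagonal (fun i => (p i : 𝕜)) * A) ⊆ Set.Icc 0 (c : 𝕜) := by
  intro μ hμ
  obtain ⟨v, hv0, hv⟩ := exists_mulVec_eq_smul_of_mem_spectrum hμ
  set w : Matrix n n 𝕜 := diagonal fun i => ((p i)⁻¹ : 𝕜)
  have hAv : A *ᵥ v = μ • (w *ᵥ v) := by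
    have hwp : w * diagonal (fun i => (p i : 𝕜)) = 1 := by
      rw [diagonal_mul_diagonal, ← diagonal_one]
      congr 1; funext i
      exact inv_mul_cancel₀ (by exact_mod_cast (hp i).1.ne')
    rw [← mulVec_smul, ← hv, mulVec_mulVec, ← mul_assoc, hwp, one_mul]
  set t := star v ⬝ᵥ w *ᵥ v
  set m := star v ⬝ᵥ v
  have hm : 0 < m := dotProduct_star_self_pos_iff.2 hv0
  have hmt : m ≤ t := by
    have : (w - 1).PosSemidef := by
      rw [← diagonal_one, diagonal_sub]
      refine PosSemidef.diagonal fun i => ?_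
      rw [Pi.zero_apply, sub_nonneg, ← RCLike.ofReal_inv, ← RCLike.ofReal_one, RCLike.ofReal_le_ofReal]
      exact one_le_inv₀ (hp i).1 |>.2 (hp i).2
    simpa [sub_mulVec, dotProduct_sub, sub_nonneg] using this.dotProduct_mulVec_nonneg v
  have hlow : 0 ≤ μ * t := by
    simpa [hAv, dotProduct_smul] using (nonneg_iff_posSemidef.1 hA.1).dotProduct_mulVec_nonneg v
  have hup : μ * t ≤ c * m := by
    have := (le_iff.1 hA.2).dotProduct_mulVec_nonneg v
    rwa [sub_mulVec, dotProduct_sub, sub_nonneg, hAv, dotProduct_smul, smul_eq_mul,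
      Algebra.algebraMap_eq_smul_one, smul_mulVec, one_mulVec, dotProduct_smul,
      RCLike.real_smul_eq_coe_mul] at this
  have ht : 0 < t := hm.trans_le hmt
  have hc : 0 ≤ (c : 𝕜) := le_of_mul_le_mul_right (by simpa using hlow.trans hup) hm
  exact ⟨le_of_mul_le_mul_right (by simpa using hlow) ht,
    le_of_mul_le_mul_right (hup.trans (mul_le_mul_of_nonneg_left hmt hc)) ht⟩

theorem map_ofReal_diagonal_add_one_sub_diagonal_mul (σ : n → ℝ) (S : Matrix n n ℝ) :
    (diagonal σ + (1 - diagonal σ) * S).map Complex.ofReal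
      = algebraMap ℂ _ 1 - diagonal (fun i => ((1 - σ i : ℝ) : ℂ)) * (1 - S.map Complex.ofReal) := by
  rw [show diagonal σ + (1 - diagonal σ) * S = 1 - (1 - diagonal σ) * (1 - S) by noncomm_ring]
  change Complex.ofRealHom.mapMatrix _ = _
  rw [map_sub, map_one, map_mul, map_sub, map_sub, map_one, map_one]
  simp only [RingHom.mapMatrix_apply, diagonal_map, map_zero, Complex.ofReal_sub, Complex.ofReal_one]
  rw [← diagonal_one, diagonal_sub]
  rfl

end Matrix

theorem RCLike.norm_one_sub_le_one_of_mem_Icc {𝕜 : Type*} [RCLike 𝕜] {z : 𝕜}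
    (hz : z ∈ Set.Icc (0 : 𝕜) 2) : ‖1 - z‖ ≤ 1 := by
  obtain ⟨x, -, rfl⟩ := RCLike.nonneg_iff_exists_ofReal.1 hz.1
  have hx : x ∈ Set.Icc (0 : ℝ) 2 := ⟨RCLike.ofReal_nonneg.1 hz.1, by exact_mod_cast hz.2⟩
  rw [← RCLike.ofReal_one, ← RCLike.ofReal_sub, RCLike.norm_ofReal, abs_le]
  constructor <;> linarith [hx.1, hx.2]

theorem cgmc_thm1 (N : ℕ) (S : Matrix (Fin N) (Fin N) ℝ) (σ : Fin N → ℝ)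
    (hS : S.IsSymm) (hspec : ∀ μ ∈ spectrum ℝ S, μ ∈ Set.Icc (-1 : ℝ) 1)
    (hσ : ∀ i, σ i ∈ Set.Ioo (0 : ℝ) 1) :
    ∀ lam ∈ spectrum ℂ
      (((Matrix.diagonal σ + (1 - Matrix.diagonal σ) * S)).map Complex.ofReal),
      ‖lam‖ ≤ 1 := by
  intro lam hlam
  set Sc := S.map Complex.ofReal
  have hSc : Sc ∈ Set.Icc (algebraMap ℝ (Matrix (Fin N) (Fin N) ℂ) (-1)) (algebraMap ℝ _ 1) := by
    refine IsHermitian.mem_Icc_of_spectrum_subset ?_ fun x hx => hspec x ?_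
    · exact (isHermitian_iff_isSymm.2 hS).map _ fun _ => by simp
    · simpa using AlgHom.spectrum_apply_subset Complex.ofRealAm.mapMatrix S hx
  have hA : 1 - Sc ∈ Set.Icc 0 (algebraMap ℝ _ 2) := by
    refine ⟨sub_nonneg.2 (by simpa using hSc.2), sub_le_comm.1 ?_⟩
    convert hSc.1 using 1
    rw [map_neg, map_one, map_ofNat]; norm_num
  rw [map_ofReal_diagonal_add_one_sub_diagonal_mul, ← spectrum.singleton_sub_eq] at hlam
  obtain ⟨_, rfl, μ, hμ, rfl⟩ := hlam
  have hp : ∀ i, 1 - σ i ∈ Set.Ioc (0 : ℝ) 1 := fun i =>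
    ⟨by linarith [(hσ i).2], by linarith [(hσ i).1]⟩
  exact RCLike.norm_one_sub_le_one_of_mem_Icc (spectrum_diagonal_mul_subset_Icc hp hA hμ)
end

section
/- Let S be a real symmetric matrix with spectrum in [-1,1], Z = diag(σ) with Z_ii ∈ (0,1), and Q = Z + (I-Z)S. Then for every positive integer k and every vector x, ‖Q^k x‖ ≤ C ‖x‖, where C = max_i √((1-σ_min)/(1-σ_max))-type condition constant; in particular the powers Q^k are uniformly bounded in operator norm. -/
/-!
With `D = (I - Z)^{1/2}`, the filter `Q = Z + (I - Z) S` satisfies `D T = Q D` for the symmetric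
matrix `T = Z + D S D`, so `Q ^ k = D T ^ k D⁻¹`. In the Loewner order, `-1 ≤ S ≤ 1` conjugates to
`-(I - Z) ≤ D S D ≤ I - Z`, whence `-1 ≤ 2Z - 1 ≤ T ≤ 1`; by the continuous functional calculus
`‖T‖ ≤ 1`. Therefore `‖Q ^ k‖ ≤ ‖D‖ ‖D⁻¹‖ ≤ √((1 - σ_min) / (1 - σ_max))`.
-/

open Matrix Set

section ContinuousFunctionalCalculus

variable {A : Type*} [NormedRing A] [StarRing A] [NormedAlgebra ℝ A]
  [IsometricContinuousFunctionalCalculus ℝ A IsSelfAdjoint]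

lemma IsSelfAdjoint.norm_le_of_spectrum_subset_Icc {a : A} (ha : IsSelfAdjoint a) {r : ℝ}
    (hr : 0 ≤ r) (h : spectrum ℝ a ⊆ Icc (-r) r) : ‖a‖ ≤ r := by
  simpa only [cfc_id ℝ a] using norm_cfc_le (f := id) (a := a) hr fun x hx => abs_le.2 (h hx)

variable [PartialOrder A] [StarOrderedRing A] [NonnegSpectrumClass ℝ A]

lemma IsSelfAdjoint.spectrum_subset_Icc_iff {a : A} (ha : IsSelfAdjoint a) (r s : ℝ) :
    spectrum ℝ a ⊆ Icc r s ↔ a ∈ Icc (algebraMap ℝ A r) (algebraMap ℝ A s) := by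
  rw [mem_Icc, algebraMap_le_iff_le_spectrum ha, le_algebraMap_iff_spectrum_le ha]
  exact ⟨fun h => ⟨fun x hx => (h hx).1, fun x hx => (h hx).2⟩,
    fun h x hx => ⟨h.1 x hx, h.2 x hx⟩⟩

lemma IsSelfAdjoint.norm_le_one_of_mem_Icc {a : A} (ha : IsSelfAdjoint a)
    (h : a ∈ Icc (-1) 1) : ‖a‖ ≤ 1 :=
  ha.norm_le_of_spectrum_subset_Icc zero_le_one <| (ha.spectrum_subset_Icc_iff _ _).2 <| by
    simpa only [map_neg, map_one] using h

end ContinuousFunctionalCalculus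

section Conjugation

variable {R : Type*} [Ring R] [StarRing R] {s z d : R}

lemma add_star_mul_mul_mem_Icc [PartialOrder R] [StarOrderedRing R] (hs : s ∈ Icc (-1) 1)
    (hz : 0 ≤ z) (hzd : z + star d * d = 1) : z + star d * s * d ∈ Icc (-1) 1 := by
  have hdd : star d * d = 1 - z := eq_sub_of_add_eq' hzd
  have lower := star_left_conjugate_le_conjugate hs.1 d
  have upper := star_left_conjugate_le_conjugate hs.2 d
  simp only [mul_neg, neg_mul, mul_one, hdd, neg_sub] at lower upper
  constructor
  · calc (-1 : R) = 0 + (0 - 1) := by simp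
      _ ≤ z + (z - 1) := by gcongr
      _ ≤ z + star d * s * d := by gcongr
  · calc z + star d * s * d ≤ z + (1 - z) := by gcongr
      _ = 1 := add_sub_cancel z 1

lemma semiconjBy_add_star_mul_mul (hd : IsSelfAdjoint d) (hdz : Commute d z)
    (hzd : z + star d * d = 1) : SemiconjBy d (z + star d * s * d) (z + (1 - z) * s) := by
  rw [← eq_sub_of_add_eq' hzd, hd.star_eq]
  unfold SemiconjBy
  rw [mul_add, add_mul, hdz.eq]
  simp only [mul_assoc]

end Conjugation

lemma SemiconjBy.pow_eq_mul_pow_mul {M : Type*} [Monoid M] {a x y b : M} (h : SemiconjBy a x y)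
    (hab : a * b = 1) (n : ℕ) : y ^ n = a * x ^ n * b := by
  rw [← mul_one (y ^ n), ← hab, ← mul_assoc, ← (h.pow_right n).eq]

/-- The hypothesis `0 < a` covers the empty index type, where `⨆ i, f i = 0`. -/
lemma Real.iSup_lt_of_forall_lt {ι : Type*} [Finite ι] {f : ι → ℝ} {a : ℝ} (ha : 0 < a)
    (h : ∀ i, f i < a) : ⨆ i, f i < a := by
  cases isEmpty_or_nonempty ι
  · rwa [Real.iSup_of_isEmpty]
  · obtain ⟨i, hi⟩ := exists_eq_ciSup_of_finite (f := f)
    exact hi ▸ h i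

namespace Matrix

open scoped Matrix.Norms.L2Operator

variable {n : Type*} [Fintype n] [DecidableEq n]

lemma diagonal_add_star_mul_self_sqrt_one_sub {σ : n → ℝ} (hσ : ∀ i, σ i ≤ 1) :
    diagonal σ + star (diagonal fun i => √(1 - σ i)) * diagonal (fun i => √(1 - σ i)) = 1 := by
  rw [star_eq_conjTranspose, diagonal_conjTranspose, diagonal_mul_diagonal, diagonal_add,
    ← diagonal_one]
  congr 1
  ext i
  simp [← sq, Real.sq_sqrt (sub_nonneg.2 (hσ i))]

open scoped MatrixOrder in
lemma l2_opNorm_diagonal_add_conj_sqrt_le_one {σ : n → ℝ} (hσ : ∀ i, σ i ∈ Icc 0 1)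
    {S : Matrix n n ℝ} (hS : IsSelfAdjoint S) (hspec : spectrum ℝ S ⊆ Icc (-1) 1) :
    ‖diagonal σ + star (diagonal fun i => √(1 - σ i)) * S * diagonal (fun i => √(1 - σ i))‖
      ≤ 1 := by
  refine ((isHermitian_diagonal σ).isSelfAdjoint.add (hS.conjugate' _)).norm_le_one_of_mem_Icc
    (add_star_mul_mul_mem_Icc ?_ (PosSemidef.diagonal fun i => (hσ i).1).nonneg
      (diagonal_add_star_mul_self_sqrt_one_sub fun i => (hσ i).2))
  simpa using (hS.spectrum_subset_Icc_iff (-1) 1).1 hspec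

lemma diagonal_add_one_sub_mul_pow {σ : n → ℝ} (hσ : ∀ i, σ i < 1) (S : Matrix n n ℝ) (k : ℕ) :
    (diagonal σ + (1 - diagonal σ) * S) ^ k =
      diagonal (fun i => √(1 - σ i)) *
        (diagonal σ + star (diagonal fun i => √(1 - σ i)) * S * diagonal (fun i => √(1 - σ i))) ^ k
        * diagonal (fun i => (√(1 - σ i))⁻¹) := by
  refine (semiconjBy_add_star_mul_mul (isHermitian_diagonal _).isSelfAdjoint (commute_diagonal _ _)
    (diagonal_add_star_mul_self_sqrt_one_sub fun i => (hσ i).le)).pow_eq_mul_pow_mul ?_ k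
  rw [diagonal_mul_diagonal, ← diagonal_one]
  exact congrArg diagonal <| funext fun i => mul_inv_cancel₀ (Real.sqrt_pos.2 (sub_pos.2 (hσ i))).ne'

lemma l2_opNorm_diagonal_le {𝕜 : Type*} [RCLike 𝕜] {v : n → 𝕜} {C : ℝ} (hC : 0 ≤ C)
    (hv : ∀ i, ‖v i‖ ≤ C) : ‖diagonal v‖ ≤ C := by
  rw [l2_opNorm_diagonal]
  exact (pi_norm_le_iff_of_nonneg hC).2 hv

lemma sqrt_sum_sq_mulVec_le (A : Matrix n n ℝ) (x : n → ℝ) :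
    √(∑ i, (A *ᵥ x) i ^ 2) ≤ ‖A‖ * √(∑ i, x i ^ 2) := by
  simpa [EuclideanSpace.norm_eq] using l2_opNorm_mulVec A (WithLp.toLp 2 x)

end Matrix

open scoped Matrix.Norms.L2Operator in
theorem cgmc_filter_power_bounded_general (N : ℕ)
    (S : Matrix (Fin N) (Fin N) ℝ) (σ : Fin N → ℝ)
    (hS : S.IsSymm) (hspec : ∀ μ ∈ spectrum ℝ S, μ ∈ Set.Icc (-1 : ℝ) 1)
    (hσ : ∀ i, σ i ∈ Set.Ioo (0 : ℝ) 1)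
    (Q : Matrix (Fin N) (Fin N) ℝ)
    (hQ : Q = Matrix.diagonal σ + (1 - Matrix.diagonal σ) * S) :
    ∀ (k : ℕ), 0 < k → ∀ x : Fin N → ℝ,
      Real.sqrt (∑ i, ((Q ^ k) *ᵥ x) i ^ 2) ≤
        Real.sqrt ((1 - ⨅ i, σ i) / (1 - ⨆ i, σ i)) * Real.sqrt (∑ i, x i ^ 2) := by
  intro k hk x
  set D := diagonal fun i => √(1 - σ i)
  set E := diagonal fun i => (√(1 - σ i))⁻¹
  set T := diagonal σ + star D * S * D
  have hsup : 0 < 1 - ⨆ i, σ i := sub_pos.2 (Real.iSup_lt_of_forall_lt one_pos fun i => (hσ i).2)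
  have hT : ‖T ^ k‖ ≤ 1 := (norm_pow_le' T hk).trans <| pow_le_one₀ (norm_nonneg T) <|
    l2_opNorm_diagonal_add_conj_sqrt_le_one (fun i => Ioo_subset_Icc_self (hσ i))
      (isHermitian_iff_isSelfAdjoint.mp hS) hspec
  have hD : ‖D‖ ≤ √(1 - ⨅ i, σ i) := by
    refine l2_opNorm_diagonal_le (Real.sqrt_nonneg _) fun i => ?_
    rw [Real.norm_of_nonneg (Real.sqrt_nonneg _)]
    exact Real.sqrt_le_sqrt (by linarith [ciInf_le (Finite.bddBelow_range σ) i])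
  have hE : ‖E‖ ≤ (√(1 - ⨆ i, σ i))⁻¹ := by
    refine l2_opNorm_diagonal_le (by positivity) fun i => ?_
    rw [Real.norm_of_nonneg (by positivity)]
    exact inv_anti₀ (Real.sqrt_pos.2 hsup)
      (Real.sqrt_le_sqrt (by linarith [le_ciSup (Finite.bddAbove_range σ) i]))
  calc √(∑ i, (Q ^ k *ᵥ x) i ^ 2) ≤ ‖Q ^ k‖ * √(∑ i, x i ^ 2) := sqrt_sum_sq_mulVec_le _ x
    _ ≤ ‖D‖ * ‖T ^ k‖ * ‖E‖ * √(∑ i, x i ^ 2) := by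
      rw [hQ, diagonal_add_one_sub_mul_pow (fun i => (hσ i).2)]
      gcongr
      exact norm_mul₃_le
    _ ≤ √(1 - ⨅ i, σ i) * 1 * (√(1 - ⨆ i, σ i))⁻¹ * √(∑ i, x i ^ 2) := by gcongr
    _ = √((1 - ⨅ i, σ i) / (1 - ⨆ i, σ i)) * √(∑ i, x i ^ 2) := by
      rw [Real.sqrt_div' _ hsup.le, mul_one, div_eq_mul_inv]

theorem cgmc_filter_power_bounded (N : ℕ) (hN : 0 < N)
    (S : Matrix (Fin N) (Fin N) ℝ) (σ : Fin N → ℝ)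
    (hS : S.IsSymm) (hspec : ∀ μ ∈ spectrum ℝ S, μ ∈ Set.Icc (-1 : ℝ) 1)
    (hσ : ∀ i, σ i ∈ Set.Ioo (0 : ℝ) 1)
    (Q : Matrix (Fin N) (Fin N) ℝ)
    (hQ : Q = Matrix.diagonal σ + (1 - Matrix.diagonal σ) * S) :
    ∀ (k : ℕ), 0 < k → ∀ x : Fin N → ℝ,
      Real.sqrt (∑ i, ((Q ^ k) *ᵥ x) i ^ 2) ≤
        Real.sqrt ((1 - ⨅ i, σ i) / (1 - ⨆ i, σ i)) * Real.sqrt (∑ i, x i ^ 2) :=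
  cgmc_filter_power_bounded_general N S σ hS hspec hσ Q hQ
end
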